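/- The pair of locally increasing maps i₀, c₀ : S¹ → Z into the zebra cylinder Z does not have a coequalizer in the category of locally ordered spaces and locally increasing maps. -/

import Mathlib

universe u v w v'

/-! ## Ordered bases and locally ordered spaces -/

/-- An *ordered subset* of `X`: a pair of a carrier set and a relation on `X`
(intended to be a partial order on the carrier). -/
structure OSet (X : Type u) : Type u where
  carrier : Set X
  le : X → X → Prop

namespace OSet

variable {X : Type u} {Y : Type v}

/-- `B` is a partially ordered subset: the relation only relates elements of the
carrier, is reflexive on the carrier, antisymmetric and transitive. -/
def IsPoset (B : OSet X) : Prop :=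
  (∀ p q, B.le p q → p ∈ B.carrier ∧ q ∈ B.carrier) ∧
  (∀ p ∈ B.carrier, B.le p p) ∧
  (∀ p q, B.le p q → B.le q p → p = q) ∧
  (∀ p q r, B.le p q → B.le q r → B.le p r)

/-- `B ⊆_lax B'`. -/
def laxSub (B B' : OSet X) : Prop :=
  B.carrier ⊆ B'.carrier ∧ ∀ p q, B.le p q → B'.le p q

/-- `B ⊆_str B'` : the carrier is included and `≤_B` is the restriction of `≤_{B'}`
to the carrier of `B`. -/
def strSub (B B' : OSet X) : Prop :=
  B.carrier ⊆ B'.carrier ∧ ∀ p ∈ B.carrier, ∀ q ∈ B.carrier, (B.le p q ↔ B'.le p q)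

/-- Product of two ordered subsets, with the product order. -/
def prod (B : OSet X) (B' : OSet Y) : OSet (X × Y) where
  carrier := B.carrier ×ˢ B'.carrier
  le p q := B.le p.1 q.1 ∧ B'.le p.2 q.2

/-- The restriction of an ordered subset to a subset `S` (of its carrier). -/
def restrict (B : OSet X) (S : Set X) : OSet X where
  carrier := S
  le p q := B.le p q ∧ p ∈ S ∧ q ∈ S

/-- `B` is a Nachbin ordered (sub)space: its order is closed in the product of the
subspace `B.carrier` (with the topology inherited from `X`) with itself. -/
def IsNachbin [TopologicalSpace X] (B : OSet X) : Prop :=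
  IsClosed {p : B.carrier × B.carrier | B.le p.1 p.2}

end OSet

/-- `𝔅` is an *ordered basis* on the topological space `X`. -/
structure IsOrderedBasis {X : Type u} [TopologicalSpace X] (𝔅 : Set (OSet X)) : Prop where
  isPoset : ∀ B ∈ 𝔅, B.IsPoset
  isBasis : TopologicalSpace.IsTopologicalBasis (OSet.carrier '' 𝔅)
  compat : ∀ x : X, ∀ B ∈ 𝔅, ∀ B' ∈ 𝔅, x ∈ B.carrier → x ∈ B'.carrier →
    ∃ B'' ∈ 𝔅, x ∈ B''.carrier ∧ B''.carrier ⊆ B.carrier ∩ B'.carrier ∧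
      ∀ p q, B''.le p q → B.le p q ∧ B'.le p q

/-- `𝔅` is a *strict* ordered basis: the interpolating element `B''` can be chosen
with `B'' ⊆_str B` and `B'' ⊆_str B'`. -/
def IsStrictOrderedBasis {X : Type u} [TopologicalSpace X] (𝔅 : Set (OSet X)) : Prop :=
  IsOrderedBasis 𝔅 ∧
    ∀ x : X, ∀ B ∈ 𝔅, ∀ B' ∈ 𝔅, x ∈ B.carrier → x ∈ B'.carrier →
      ∃ B'' ∈ 𝔅, x ∈ B''.carrier ∧ B''.strSub B ∧ B''.strSub B'

/-- `𝔅'` is coarser than `𝔅`. -/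
def CoarserThan {X : Type u} (𝔅' 𝔅 : Set (OSet X)) : Prop :=
  ∀ x : X, ∀ B' ∈ 𝔅', x ∈ B'.carrier → ∃ B ∈ 𝔅, x ∈ B.carrier ∧ B.laxSub B'

/-- `𝔅'` is strictly coarser than `𝔅` (`⊆_lax` replaced by `⊆_str`). -/
def StrictCoarserThan {X : Type u} (𝔅' 𝔅 : Set (OSet X)) : Prop :=
  ∀ x : X, ∀ B' ∈ 𝔅', x ∈ B'.carrier → ∃ B ∈ 𝔅, x ∈ B.carrier ∧ B.strSub B'

/-- Two ordered bases are equivalent when each is coarser than the other. -/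
def EquivBases {X : Type u} (𝔅 𝔅' : Set (OSet X)) : Prop :=
  CoarserThan 𝔅' 𝔅 ∧ CoarserThan 𝔅 𝔅'

/-- Strict equivalence of ordered bases. -/
def StrictEquivBases {X : Type u} (𝔅 𝔅' : Set (OSet X)) : Prop :=
  StrictCoarserThan 𝔅' 𝔅 ∧ StrictCoarserThan 𝔅 𝔅'

/-- The *open posets* `Ō(𝔅)` determined by an ordered basis `𝔅`. -/
def openPosets {X : Type u} (𝔅 : Set (OSet X)) : Set (OSet X) :=
  {A | ∀ x ∈ A.carrier, ∃ B ∈ 𝔅, x ∈ B.carrier ∧ B.laxSub A}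

/-- `f` is locally increasing at `x`, w.r.t. the ordered bases `𝔅` (source) and
`𝔅'` (target). -/
def LocIncrAt {X : Type u} {Y : Type v} (𝔅 : Set (OSet X)) (𝔅' : Set (OSet Y))
    (f : X → Y) (x : X) : Prop :=
  ∀ B' ∈ 𝔅', f x ∈ B'.carrier →
    ∃ B ∈ 𝔅, x ∈ B.carrier ∧ (∀ p ∈ B.carrier, f p ∈ B'.carrier) ∧
      ∀ p q, B.le p q → B'.le (f p) (f q)

/-- `f` is locally increasing. -/
def LocIncr {X : Type u} {Y : Type v} (𝔅 : Set (OSet X)) (𝔅' : Set (OSet Y))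
    (f : X → Y) : Prop :=
  ∀ x : X, LocIncrAt 𝔅 𝔅' f x

/-- The locally ordered space given by the basis `𝔅` is locally Nachbin. -/
def IsLocallyNachbin {X : Type u} [TopologicalSpace X] (𝔅 : Set (OSet X)) : Prop :=
  ∀ x : X, ∀ O ∈ openPosets 𝔅, x ∈ O.carrier →
    ∃ O' ∈ openPosets 𝔅, x ∈ O'.carrier ∧ O'.laxSub O ∧ O'.IsNachbin

/-- The product ordered basis on `X × Y`. -/
def prodBasis {X : Type u} {Y : Type v} (𝔅 : Set (OSet X)) (𝔅' : Set (OSet Y)) :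
    Set (OSet (X × Y)) :=
  {C | ∃ B ∈ 𝔅, ∃ B' ∈ 𝔅', C = B.prod B'}

/-- A topological space viewed as a locally ordered space: all its open subsets,
each ordered by equality. -/
def trivBasis (T : Type v) [TopologicalSpace T] : Set (OSet T) :=
  {B | ∃ U : Set T, IsOpen U ∧ B = ⟨U, fun p q => p = q ∧ p ∈ U⟩}

/-! ## The directed circle -/

/-- The proper open arc `{e^{ix} : a < x < b}` of the unit circle, with its
standard partial order. -/
def arcOSet (a b : ℝ) : OSet Circle where
  carrier := Circle.exp '' Set.Ioo a b
  le p q := ∃ x ∈ Set.Ioo a b, ∃ y ∈ Set.Ioo a b, x ≤ y ∧ Circle.exp x = p ∧ Circle.exp y = q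

/-- The strict ordered basis of the directed circle `S⃗¹`: all proper open arcs
with their standard orders. -/
def dCircleBasis : Set (OSet Circle) :=
  {B | ∃ a b : ℝ, 0 < b - a ∧ b - a < 2 * Real.pi ∧ B = arcOSet a b}

/-- `K(f) = {t | ∀ s s', f (s,t) = f (s',t)}`. -/
def Kset {X : Type u} {Y : Type v} (f : Circle × X → Y) : Set X :=
  {t | ∀ s s' : Circle, f (s, t) = f (s', t)}

/-! ## The category of locally ordered spaces -/

/-- A bundled locally ordered space (an object of the category `LPO`). -/
structure LocOrdSpace : Type (u + 1) where
  carrier : Type u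
  top : TopologicalSpace carrier
  basis : Set (OSet carrier)
  isBasis : @IsOrderedBasis carrier top basis

/-- `g : B → C` is the coequalizer of `i, j : A → B` in the full subcategory of
locally ordered spaces (at universe `u`) whose objects satisfy `P`: `g` is locally
increasing, coequalizes `i` and `j`, and every locally increasing map
`f : B → Y` (for `Y` an object satisfying `P`) with `f ∘ i = f ∘ j` factors
through `g` by a unique locally increasing map. -/
def IsCoeqIn (P : LocOrdSpace.{u} → Prop) {A : Type w} {B : Type v} {C : Type v'}
    (𝔅 : Set (OSet B)) (ℭ : Set (OSet C)) (i j : A → B) (g : B → C) : Prop :=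
  LocIncr 𝔅 ℭ g ∧ g ∘ i = g ∘ j ∧
    ∀ Y : LocOrdSpace.{u}, P Y → ∀ f : B → Y.carrier,
      LocIncr 𝔅 Y.basis f → f ∘ i = f ∘ j →
        ∃! h : C → Y.carrier, LocIncr ℭ Y.basis h ∧ f = h ∘ g

/-! ## The zebra cylinder -/

/-- A basic ordered subset `α × O` of the zebra cylinder `S¹ × [0,1]`, for the
sequence `d`: `(s,u) ⪯ (s',u')` iff `u = u'` and (`s = s'`, or else `s ≤_α s'`
and `u` belongs to `I(n)` for some `n ∈ ℕ ∪ {∞}`). -/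
def zebraOSet (d : ℕ → ℝ) (a b : ℝ) (O : Set unitInterval) :
    OSet (Circle × unitInterval) where
  carrier := (arcOSet a b).carrier ×ˢ O
  le p q :=
    p ∈ (arcOSet a b).carrier ×ˢ O ∧ q ∈ (arcOSet a b).carrier ×ˢ O ∧ p.2 = q.2 ∧
      (p.1 = q.1 ∨ ((arcOSet a b).le p.1 q.1 ∧
        ((p.2 : ℝ) = 0 ∨ ∃ n : ℕ, (p.2 : ℝ) ∈ Set.Icc (d (2 * n + 1)) (d (2 * n)))))

/-- The strict ordered basis of the zebra cylinder. -/
def zebraBasis (d : ℕ → ℝ) : Set (OSet (Circle × unitInterval)) :=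
  {B | ∃ a b : ℝ, 0 < b - a ∧ b - a < 2 * Real.pi ∧
    ∃ O : Set unitInterval, IsOpen O ∧ B = zebraOSet d a b O}

/-!
Suppose `g : Z → C` were a coequalizer. It is constant on the bottom circle, so a neighbourhood
of that circle is mapped into a single ordered chart of `C`; on the stripe circles close to the
bottom, `g` is then increasing along every short arc into that chart, and going once around the
circle, antisymmetry forces `g` to be constant on them. On the other hand, choose such a stripe
circle `S¹ × {c₁}` and a level `c₀ < c₁` with no stripe in between: collapsing each circle of the
tube `S¹ × [0, c₀]` to a point is locally increasing, coequalizes `i₀` and `c₀`, and is injective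
on `S¹ × {c₁}`, so it cannot factor through `g`.
-/

open Set Filter Topology TopologicalSpace Real

namespace OSet

variable {X : Type u} {Y : Type v}

theorem laxSub_refl (B : OSet X) : B.laxSub B :=
  ⟨subset_rfl, fun _ _ h => h⟩

theorem laxSub.trans {B B' B'' : OSet X} (h : B.laxSub B') (h' : B'.laxSub B'') : B.laxSub B'' :=
  ⟨h.1.trans h'.1, fun p q hpq => h'.2 p q (h.2 p q hpq)⟩

def comap (e : Y → X) (B : OSet X) : OSet Y where
  carrier := e ⁻¹' B.carrier
  le p q := B.le (e p) (e q)

theorem IsPoset.comap {B : OSet X} (hB : B.IsPoset) {e : Y → X} (he : Function.Injective e) :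
    (B.comap e).IsPoset := by
  obtain ⟨hmem, hrefl, hanti, htrans⟩ := hB
  exact ⟨fun _ _ h => hmem _ _ h, fun _ hp => hrefl _ hp,
    fun _ _ h h' => he (hanti _ _ h h'), fun _ _ _ h h' => htrans _ _ _ h h'⟩

theorem laxSub.comap {B B' : OSet X} (h : B.laxSub B') (e : Y → X) :
    (B.comap e).laxSub (B'.comap e) :=
  ⟨preimage_mono h.1, fun _ _ hpq => h.2 _ _ hpq⟩

end OSet

/-- An ordered basis without its topology (see `IsInterpolatingCover.isOrderedBasis`). -/
structure IsInterpolatingCover {X : Type u} (𝔅 : Set (OSet X)) : Prop where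
  isPoset : ∀ B ∈ 𝔅, B.IsPoset
  cover : ∀ x, ∃ B ∈ 𝔅, x ∈ B.carrier
  inter : ∀ x, ∀ B ∈ 𝔅, ∀ B' ∈ 𝔅, x ∈ B.carrier → x ∈ B'.carrier →
    ∃ B'' ∈ 𝔅, x ∈ B''.carrier ∧ B''.laxSub B ∧ B''.laxSub B'

namespace IsInterpolatingCover

variable {X : Type u} {Y : Type v} {𝔅 : Set (OSet X)}

theorem isOrderedBasis (h : IsInterpolatingCover 𝔅) :
    @IsOrderedBasis X (generateFrom (OSet.carrier '' 𝔅)) 𝔅 := by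
  let _ : TopologicalSpace X := generateFrom (OSet.carrier '' 𝔅)
  refine ⟨h.isPoset, ⟨?_, ?_, rfl⟩, ?_⟩
  · rintro _ ⟨B, hB, rfl⟩ _ ⟨B', hB', rfl⟩ x ⟨hx, hx'⟩
    obtain ⟨B'', hB'', hxB'', hsub, hsub'⟩ := h.inter x B hB B' hB' hx hx'
    exact ⟨B''.carrier, mem_image_of_mem _ hB'', hxB'', subset_inter hsub.1 hsub'.1⟩
  · refine eq_univ_of_forall fun x => ?_
    obtain ⟨B, hB, hx⟩ := h.cover x
    exact ⟨B.carrier, mem_image_of_mem _ hB, hx⟩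
  · intro x B hB B' hB' hx hx'
    obtain ⟨B'', hB'', hxB'', hsub, hsub'⟩ := h.inter x B hB B' hB' hx hx'
    exact ⟨B'', hB'', hxB'', subset_inter hsub.1 hsub'.1,
      fun p q hpq => ⟨hsub.2 p q hpq, hsub'.2 p q hpq⟩⟩

theorem comap (h : IsInterpolatingCover 𝔅) {e : Y → X} (he : Function.Injective e) :
    IsInterpolatingCover (OSet.comap e '' 𝔅) := by
  refine ⟨?_, fun y => ?_, ?_⟩
  · rintro _ ⟨B, hB, rfl⟩
    exact (h.isPoset B hB).comap he
  · obtain ⟨B, hB, hy⟩ := h.cover (e y)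
    exact ⟨B.comap e, mem_image_of_mem _ hB, hy⟩
  · rintro y _ ⟨B, hB, rfl⟩ _ ⟨B', hB', rfl⟩ hy hy'
    obtain ⟨B'', hB'', hyB'', hsub, hsub'⟩ := h.inter (e y) B hB B' hB' hy hy'
    exact ⟨B''.comap e, mem_image_of_mem _ hB'', hyB'', hsub.comap e, hsub'.comap e⟩

def uliftSpace (h : IsInterpolatingCover 𝔅) : LocOrdSpace.{max u w} where
  carrier := ULift.{w} X
  top := generateFrom (OSet.carrier '' (OSet.comap ULift.down '' 𝔅))
  basis := OSet.comap ULift.down '' 𝔅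
  isBasis := (h.comap ULift.down_injective).isOrderedBasis

end IsInterpolatingCover

theorem LocIncr.comap {X : Type u} {Y : Type v} {Z : Type w} {𝔅 : Set (OSet Z)}
    {𝔅' : Set (OSet X)} {e : Y → X} {f : Z → Y} (hf : LocIncr 𝔅 𝔅' (e ∘ f)) :
    LocIncr 𝔅 (OSet.comap e '' 𝔅') f := by
  rintro z _ ⟨B', hB', rfl⟩ hz
  exact hf z B' hB' hz

def LocallyRelMonotoneAt {P : Type*} (r : P → P → Prop) (G : ℝ → P) (z : ℝ) : Prop :=
  ∃ l u, z ∈ Ioo l u ∧ ∀ x ∈ Ioo l u, ∀ y ∈ Ioo l u, x ≤ y → r (G x) (G y)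

section Chain

variable {P : Type*} {r : P → P → Prop}

theorem rel_of_forall_locallyRelMonotoneAt (htrans : ∀ p q s, r p q → r q s → r p s)
    {G : ℝ → P} {x y : ℝ} (hxy : x ≤ y) (hloc : ∀ z ∈ Icc x y, LocallyRelMonotoneAt r G z) :
    r (G x) (G y) := by
  set S := {z ∈ Icc x y | r (G x) (G z)}
  have hxS : x ∈ S := by
    obtain ⟨l, u, hx, hmono⟩ := hloc x ⟨le_rfl, hxy⟩
    exact ⟨⟨le_rfl, hxy⟩, hmono x hx x hx le_rfl⟩
  have hbdd : BddAbove S := ⟨y, fun z hz => hz.1.2⟩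
  set M := sSup S
  have hM : M ∈ Icc x y := ⟨le_csSup hbdd hxS, csSup_le ⟨x, hxS⟩ fun z hz => hz.1.2⟩
  obtain ⟨l, u, hMlu, hmono⟩ := hloc M hM
  obtain ⟨z, hzS, hlz⟩ := exists_lt_of_lt_csSup ⟨x, hxS⟩ hMlu.1
  have hzM : z ≤ M := le_csSup hbdd hzS
  have hMS : r (G x) (G M) :=
    htrans _ _ _ hzS.2 (hmono z ⟨hlz, hzM.trans_lt hMlu.2⟩ M hMlu hzM)
  obtain hMy | hMy := hM.2.eq_or_lt
  · rwa [← hMy]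
  set z' := min y ((M + u) / 2)
  have hMz' : M < z' := lt_min hMy (by linarith [hMlu.2])
  have hz'S : z' ∈ S := ⟨⟨hM.1.trans hMz'.le, min_le_left _ _⟩, htrans _ _ _ hMS
    (hmono M hMlu z' ⟨hMlu.1.trans hMz', (min_le_right _ _).trans_lt (by linarith [hMlu.2])⟩
      hMz'.le)⟩
  exact absurd (le_csSup hbdd hz'S) hMz'.not_ge

theorem Circle.eq_one_of_locallyRelMonotoneAt (hanti : ∀ p q, r p q → r q p → p = q)
    (htrans : ∀ p q s, r p q → r q s → r p s) {F : Circle → P}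
    (hloc : ∀ θ ∈ Icc (-π) π, LocallyRelMonotoneAt r (F ∘ Circle.exp) θ) (s : Circle) :
    F s = F 1 := by
  have key : ∀ θ ∈ Icc (-π) π, F (Circle.exp θ) = F (Circle.exp π) := by
    intro θ hθ
    have h₁ := rel_of_forall_locallyRelMonotoneAt htrans hθ.1
      fun z hz => hloc z ⟨hz.1, hz.2.trans hθ.2⟩
    have h₂ := rel_of_forall_locallyRelMonotoneAt htrans hθ.2
      fun z hz => hloc z ⟨hθ.1.trans hz.1, hz.2⟩
    have hexp : Circle.exp (-π) = Circle.exp π := Circle.exp_eq_exp.mpr ⟨-1, by push_cast; ring⟩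
    simp only [Function.comp_apply, hexp] at h₁ h₂
    exact hanti _ _ h₂ h₁
  calc F s = F (Circle.exp (s : ℂ).arg) := by rw [Circle.exp_arg]
    _ = F (Circle.exp 0) := (key _ ⟨(Complex.neg_pi_lt_arg _).le, Complex.arg_le_pi _⟩).trans
        (key 0 ⟨by linarith [pi_pos], pi_pos.le⟩).symm
    _ = F 1 := by rw [Circle.exp_zero]

end Chain

section Arc

variable {a b : ℝ}

theorem arcOSet_isPoset (hab : b - a < 2 * π) : (arcOSet a b).IsPoset := by
  have hinj : InjOn Circle.exp (Ioo a b) := (Circle.exp_injOn_Icc hab).mono Ioo_subset_Icc_self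
  refine ⟨?_, ?_, ?_, ?_⟩
  · rintro _ _ ⟨x, hx, y, hy, -, rfl, rfl⟩
    exact ⟨mem_image_of_mem _ hx, mem_image_of_mem _ hy⟩
  · rintro _ ⟨x, hx, rfl⟩
    exact ⟨x, hx, x, hx, le_rfl, rfl, rfl⟩
  · rintro _ _ ⟨x, hx, y, hy, hxy, rfl, rfl⟩ ⟨y', hy', x', hx', hyx, hy'y, hx'x⟩
    rw [hinj hy' hy hy'y, hinj hx' hx hx'x] at hyx
    rw [le_antisymm hxy hyx]
  · rintro _ _ _ ⟨x, hx, y, hy, hxy, rfl, rfl⟩ ⟨y', hy', z, hz, hyz, hy'y, rfl⟩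
    rw [hinj hy' hy hy'y] at hyz
    exact ⟨x, hx, z, hz, hxy.trans hyz, rfl, rfl⟩

theorem arcOSet_laxSub_of_le {a' b' : ℝ} (ha : a ≤ a') (hb : b' ≤ b) :
    (arcOSet a' b').laxSub (arcOSet a b) := by
  have hsub : Ioo a' b' ⊆ Ioo a b := Ioo_subset_Ioo ha hb
  exact ⟨image_mono hsub, fun _ _ ⟨x, hx, y, hy, hxy, hpx, hqy⟩ =>
    ⟨x, hsub hx, y, hsub hy, hxy, hpx, hqy⟩⟩

theorem arcOSet_add_int_mul_two_pi_laxSub (k : ℤ) :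
    (arcOSet (a + k * (2 * π)) (b + k * (2 * π))).laxSub (arcOSet a b) := by
  have hshift : ∀ x ∈ Ioo (a + k * (2 * π)) (b + k * (2 * π)),
      x - k * (2 * π) ∈ Ioo a b ∧ Circle.exp (x - k * (2 * π)) = Circle.exp x := fun x hx =>
    ⟨⟨by linarith [hx.1], by linarith [hx.2]⟩, Circle.exp_eq_exp.mpr ⟨-k, by push_cast; ring⟩⟩
  refine ⟨?_, ?_⟩
  · rintro _ ⟨x, hx, rfl⟩
    exact ⟨_, (hshift x hx).1, (hshift x hx).2⟩
  · rintro _ _ ⟨x, hx, y, hy, hxy, rfl, rfl⟩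
    exact ⟨_, (hshift x hx).1, _, (hshift y hy).1, by linarith, (hshift x hx).2, (hshift y hy).2⟩

theorem exists_arcOSet_laxSub_inter {a' b' : ℝ} (hab : b - a < 2 * π) {s : Circle}
    (hs : s ∈ (arcOSet a b).carrier) (hs' : s ∈ (arcOSet a' b').carrier) :
    ∃ a'' b'', 0 < b'' - a'' ∧ b'' - a'' < 2 * π ∧ s ∈ (arcOSet a'' b'').carrier ∧
      (arcOSet a'' b'').laxSub (arcOSet a b) ∧ (arcOSet a'' b'').laxSub (arcOSet a' b') := by
  obtain ⟨x, hx, rfl⟩ := hs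
  obtain ⟨x', hx', hxx'⟩ := hs'
  obtain ⟨k, hk⟩ := Circle.exp_eq_exp.mp hxx'.symm
  have hx'' : x ∈ Ioo (a' + k * (2 * π)) (b' + k * (2 * π)) :=
    ⟨by linarith [hx'.1], by linarith [hx'.2]⟩
  have hmem : x ∈ Ioo (max a (a' + k * (2 * π))) (min b (b' + k * (2 * π))) :=
    ⟨max_lt hx.1 hx''.1, lt_min hx.2 hx''.2⟩
  refine ⟨max a (a' + k * (2 * π)), min b (b' + k * (2 * π)), ?_, ?_, ⟨x, hmem, rfl⟩,
    arcOSet_laxSub_of_le (le_max_left _ _) (min_le_left _ _),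
    (arcOSet_laxSub_of_le (le_max_right _ _) (min_le_right _ _)).trans
      (arcOSet_add_int_mul_two_pi_laxSub k)⟩
  · linarith [hmem.1, hmem.2]
  · linarith [le_max_left a (a' + k * (2 * π)), min_le_left b (b' + k * (2 * π))]

theorem locallyRelMonotoneAt_arcOSet {θ : ℝ} (hθ : Circle.exp θ ∈ (arcOSet a b).carrier) :
    LocallyRelMonotoneAt (arcOSet a b).le Circle.exp θ := by
  obtain ⟨x₀, hx₀, hx₀θ⟩ := hθ
  obtain ⟨k, hk⟩ := Circle.exp_eq_exp.mp hx₀θ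
  refine ⟨a + ↑(-k) * (2 * π), b + ↑(-k) * (2 * π), ?_, fun x hx y hy hxy =>
    (arcOSet_add_int_mul_two_pi_laxSub (-k)).2 _ _ ⟨x, hx, y, hy, hxy, rfl, rfl⟩⟩
  push_cast
  exact ⟨by linarith [hx₀.1], by linarith [hx₀.2]⟩

end Arc

/-- `t ∈ I(n)` for some `n ∈ ℕ ∪ {∞}`. -/
def zebraLevel (d : ℕ → ℝ) (t : ℝ) : Prop :=
  t = 0 ∨ ∃ n : ℕ, t ∈ Icc (d (2 * n + 1)) (d (2 * n))

section Zebra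

variable {d : ℕ → ℝ} {a b : ℝ} {O : Set unitInterval}

theorem zebraOSet_isPoset (hab : b - a < 2 * π) : (zebraOSet d a b O).IsPoset := by
  obtain ⟨-, -, hanti, htrans⟩ := arcOSet_isPoset hab
  refine ⟨fun _ _ h => ⟨h.1, h.2.1⟩, fun _ hp => ⟨hp, hp, rfl, Or.inl rfl⟩, ?_, ?_⟩
  · rintro p q ⟨-, -, h2, h1⟩ ⟨-, -, -, h1'⟩
    refine Prod.ext ?_ h2
    rcases h1 with h1 | ⟨h1, -⟩
    · exact h1
    rcases h1' with h1' | ⟨h1', -⟩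
    · exact h1'.symm
    exact hanti _ _ h1 h1'
  · rintro p q r ⟨hp, -, hpq2, hpq⟩ ⟨-, hr, hqr2, hqr⟩
    refine ⟨hp, hr, hpq2.trans hqr2, ?_⟩
    rcases hpq with hpq | ⟨hpq, hlev⟩
    · rw [hpq, hpq2]
      exact hqr
    rcases hqr with hqr | ⟨hqr, -⟩
    · exact Or.inr ⟨hqr ▸ hpq, hlev⟩
    · exact Or.inr ⟨htrans _ _ _ hpq hqr, hlev⟩

theorem zebraBasis_isPoset {B : OSet (Circle × unitInterval)} (hB : B ∈ zebraBasis d) :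
    B.IsPoset := by
  obtain ⟨a, b, -, hab, O, -, rfl⟩ := hB
  exact zebraOSet_isPoset hab

theorem zebraOSet_laxSub {a' b' : ℝ} {O' : Set unitInterval}
    (harc : (arcOSet a' b').laxSub (arcOSet a b)) (hO : O' ⊆ O) :
    (zebraOSet d a' b' O').laxSub (zebraOSet d a b O) := by
  have hsub : (arcOSet a' b').carrier ×ˢ O' ⊆ (arcOSet a b).carrier ×ˢ O := prod_mono harc.1 hO
  exact ⟨hsub, fun _ _ ⟨hp, hq, h2, h⟩ =>
    ⟨hsub hp, hsub hq, h2, h.imp_right fun h => ⟨harc.2 _ _ h.1, h.2⟩⟩⟩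

theorem zebraOSet_le_of_arcOSet_le {s s' : Circle} {t : unitInterval}
    (h : (arcOSet a b).le s s') (ht : t ∈ O) (hlev : zebraLevel d t) :
    (zebraOSet d a b O).le (s, t) (s', t) := by
  obtain ⟨x, hx, y, hy, -, hs, hs'⟩ := id h
  exact ⟨⟨⟨x, hx, hs⟩, ht⟩, ⟨⟨y, hy, hs'⟩, ht⟩, rfl, Or.inr ⟨h, hlev⟩⟩

theorem zebraBasis_le {B : OSet (Circle × unitInterval)} (hB : B ∈ zebraBasis d)
    {p q : Circle × unitInterval} (h : B.le p q) : p.2 = q.2 ∧ (p.1 = q.1 ∨ zebraLevel d p.2) := by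
  obtain ⟨a, b, -, -, O, -, rfl⟩ := hB
  exact ⟨h.2.2.1, h.2.2.2.imp_right And.right⟩

theorem exists_zebraBasis_mem (hO : IsOpen O) {p : Circle × unitInterval} (hp : p.2 ∈ O) :
    ∃ B ∈ zebraBasis d, p ∈ B.carrier ∧ B.carrier ⊆ Prod.snd ⁻¹' O := by
  refine ⟨zebraOSet d ((p.1 : ℂ).arg - 1) ((p.1 : ℂ).arg + 1) O,
    ⟨_, _, by linarith, by linarith [pi_gt_three], O, hO, rfl⟩,
    ⟨⟨(p.1 : ℂ).arg, ⟨by linarith, by linarith⟩, Circle.exp_arg p.1⟩, hp⟩, fun q hq => hq.2⟩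

theorem exists_zebraBasis_laxSub_inter {B B' : OSet (Circle × unitInterval)}
    (hB : B ∈ zebraBasis d) (hB' : B' ∈ zebraBasis d) {p : Circle × unitInterval}
    (hp : p ∈ B.carrier) (hp' : p ∈ B'.carrier) :
    ∃ B'' ∈ zebraBasis d, p ∈ B''.carrier ∧ B''.laxSub B ∧ B''.laxSub B' := by
  obtain ⟨a, b, -, hab, O, hO, rfl⟩ := hB
  obtain ⟨a', b', -, -, O', hO', rfl⟩ := hB'
  obtain ⟨a'', b'', h₁, h₂, hp'', hsub, hsub'⟩ := exists_arcOSet_laxSub_inter hab hp.1 hp'.1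
  exact ⟨zebraOSet d a'' b'' (O ∩ O'), ⟨a'', b'', h₁, h₂, O ∩ O', hO.inter hO', rfl⟩,
    ⟨hp'', hp.2, hp'.2⟩, zebraOSet_laxSub hsub inter_subset_left,
    zebraOSet_laxSub hsub' inter_subset_right⟩

end Zebra

section BottomCircle

variable {d : ℕ → ℝ} {C : Type v} {ℭ : Set (OSet C)} {g : Circle × unitInterval → C}

theorem eventually_locallyRelMonotoneAt_of_locIncr (hg : LocIncr (zebraBasis d) ℭ g)
    {B' : OSet C} (hB' : B' ∈ ℭ) (hbot : ∀ s, g (s, 0) ∈ B'.carrier) (θ : ℝ) :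
    ∀ᶠ p : unitInterval × ℝ in 𝓝 (0, θ), zebraLevel d p.1 →
      LocallyRelMonotoneAt B'.le (fun x => g (Circle.exp x, p.1)) p.2 := by
  obtain ⟨B, ⟨a, b, -, -, O, hO, rfl⟩, ⟨hθ, h0⟩, -, hmono⟩ :=
    hg _ B' hB' (hbot (Circle.exp θ))
  obtain ⟨l, u, hθlu, harc⟩ := locallyRelMonotoneAt_arcOSet hθ
  filter_upwards [prod_mem_nhds (hO.mem_nhds h0) (isOpen_Ioo.mem_nhds hθlu)] with p hp hlev
  exact ⟨l, u, hp.2, fun x hx y hy hxy =>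
    hmono _ _ (zebraOSet_le_of_arcOSet_le (harc x hx y hy hxy) hp.1 hlev)⟩

theorem eventually_eq_on_circle_of_locIncr [TopologicalSpace C] (hℭ : IsOrderedBasis ℭ)
    (hg : LocIncr (zebraBasis d) ℭ g) (hbot : ∀ s, g (s, 0) = g (1, 0)) :
    ∀ᶠ t : unitInterval in 𝓝 0, zebraLevel d t → ∀ s, g (s, t) = g (1, t) := by
  obtain ⟨_, ⟨B', hB', rfl⟩, hg1⟩ : g (1, 0) ∈ ⋃₀ (OSet.carrier '' ℭ) :=
    hℭ.isBasis.sUnion_eq ▸ mem_univ _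
  obtain ⟨-, -, hanti, htrans⟩ := hℭ.isPoset B' hB'
  filter_upwards [isCompact_Icc.eventually_forall_of_forall_eventually (K := Icc (-π) π)
    (P := fun (t : unitInterval) θ =>
      zebraLevel d t → LocallyRelMonotoneAt B'.le (fun x => g (Circle.exp x, t)) θ)
    fun θ _ => eventually_locallyRelMonotoneAt_of_locIncr hg hB' (fun s => hbot s ▸ hg1) θ]
    with t ht hlev
  exact Circle.eq_one_of_locallyRelMonotoneAt hanti htrans (F := fun s => g (s, t))
    fun θ hθ => ht θ hθ hlev

end BottomCircle

section Collapse

variable {d : ℕ → ℝ} {c₀ c₁ : ℝ}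

def tubeOSet (c₁ : ℝ) : OSet (Circle × unitInterval) where
  carrier := {p | (p.2 : ℝ) < c₁}
  le p q := p = q ∧ (p.2 : ℝ) < c₁

theorem tubeOSet_isPoset : (tubeOSet c₁).IsPoset :=
  ⟨fun _ _ ⟨hpq, hp⟩ => ⟨hp, hpq ▸ hp⟩, fun _ hp => ⟨rfl, hp⟩, fun _ _ h _ => h.1,
    fun _ _ _ h h' => ⟨h.1.trans h'.1, h.2⟩⟩

theorem zebraBasis_laxSub_tubeOSet (hgap : ∀ t ∈ Ioo c₀ c₁, ¬ zebraLevel d t)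
    {B : OSet (Circle × unitInterval)} (hB : B ∈ zebraBasis d)
    (hBgap : ∀ p ∈ B.carrier, (p.2 : ℝ) ∈ Ioo c₀ c₁) : B.laxSub (tubeOSet c₁) := by
  refine ⟨fun p hp => (hBgap p hp).2, fun p q hpq => ?_⟩
  have hp := hBgap p ((zebraBasis_isPoset hB).1 p q hpq).1
  obtain ⟨h2, h1 | hlev⟩ := zebraBasis_le hB hpq
  · exact ⟨Prod.ext h1 h2, hp.2⟩
  · exact absurd hlev (hgap _ hp)

/-- Charts of the quotient of `Z` in which each circle of the tube `S¹ × [0, c₀]` is collapsed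
to a point (see `collapse`); `c₁` is a level above `c₀` with no stripe in between. -/
def collapseBasis (d : ℕ → ℝ) (c₀ c₁ : ℝ) : Set (OSet (Circle × unitInterval)) :=
  insert (tubeOSet c₁) {B ∈ zebraBasis d | ∀ p ∈ B.carrier, c₀ < (p.2 : ℝ)}

theorem exists_collapseBasis_laxSub_inter_tubeOSet (hgap : ∀ t ∈ Ioo c₀ c₁, ¬ zebraLevel d t)
    {B : OSet (Circle × unitInterval)} (hB : B ∈ zebraBasis d)
    (habove : ∀ p ∈ B.carrier, c₀ < (p.2 : ℝ)) {p : Circle × unitInterval}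
    (hp : p ∈ B.carrier) (hp₁ : (p.2 : ℝ) < c₁) :
    ∃ B'' ∈ collapseBasis d c₀ c₁, p ∈ B''.carrier ∧ B''.laxSub B ∧ B''.laxSub (tubeOSet c₁) := by
  obtain ⟨B₁, hB₁, hpB₁, hB₁sub⟩ :=
    exists_zebraBasis_mem (d := d) (isOpen_lt continuous_subtype_val continuous_const) hp₁
  obtain ⟨B'', hB'', hpB'', hsub, hsub₁⟩ := exists_zebraBasis_laxSub_inter hB hB₁ hp hpB₁
  have hgap'' : ∀ q ∈ B''.carrier, (q.2 : ℝ) ∈ Ioo c₀ c₁ := fun q hq =>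
    ⟨habove q (hsub.1 hq), hB₁sub (hsub₁.1 hq)⟩
  exact ⟨B'', Or.inr ⟨hB'', fun q hq => (hgap'' q hq).1⟩, hpB'', hsub,
    zebraBasis_laxSub_tubeOSet hgap hB'' hgap''⟩

theorem collapseBasis_isInterpolatingCover (hc : c₀ < c₁)
    (hgap : ∀ t ∈ Ioo c₀ c₁, ¬ zebraLevel d t) :
    IsInterpolatingCover (collapseBasis d c₀ c₁) := by
  refine ⟨?_, fun p => ?_, ?_⟩
  · rintro B (rfl | ⟨hB, -⟩)
    exacts [tubeOSet_isPoset, zebraBasis_isPoset hB]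
  · by_cases hp : (p.2 : ℝ) < c₁
    · exact ⟨tubeOSet c₁, mem_insert _ _, hp⟩
    obtain ⟨B, hB, hpB, hBsub⟩ := exists_zebraBasis_mem (d := d) (O := {t | c₀ < (t : ℝ)})
      (isOpen_lt continuous_const continuous_subtype_val) (p := p) (hc.trans_le (not_lt.mp hp))
    exact ⟨B, Or.inr ⟨hB, fun q hq => hBsub hq⟩, hpB⟩
  · rintro p B (rfl | ⟨hB, habove⟩) B' (rfl | ⟨hB', habove'⟩) hp hp'
    · exact ⟨tubeOSet c₁, mem_insert _ _, hp, OSet.laxSub_refl _, OSet.laxSub_refl _⟩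
    · obtain ⟨B'', hB'', hpB'', hsub', hsub⟩ :=
        exists_collapseBasis_laxSub_inter_tubeOSet hgap hB' habove' hp' hp
      exact ⟨B'', hB'', hpB'', hsub, hsub'⟩
    · exact exists_collapseBasis_laxSub_inter_tubeOSet hgap hB habove hp hp'
    · obtain ⟨B'', hB'', hpB'', hsub, hsub'⟩ := exists_zebraBasis_laxSub_inter hB hB' hp hp'
      exact ⟨B'', Or.inr ⟨hB'', fun q hq => habove q (hsub.1 hq)⟩, hpB'', hsub, hsub'⟩

noncomputable def collapse (c₀ : ℝ) (p : Circle × unitInterval) : Circle × unitInterval :=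
  (if (p.2 : ℝ) ≤ c₀ then 1 else p.1, p.2)

theorem collapse_of_lt {p : Circle × unitInterval} (h : c₀ < p.2) : collapse c₀ p = p :=
  Prod.ext (if_neg h.not_ge) rfl

theorem collapse_zero (hc₀ : 0 ≤ c₀) (s : Circle) : collapse c₀ (s, 0) = (1, 0) :=
  Prod.ext (if_pos (by simpa using hc₀)) rfl

theorem locIncr_collapse (hgap : ∀ t ∈ Ioo c₀ c₁, ¬ zebraLevel d t) :
    LocIncr (zebraBasis d) (collapseBasis d c₀ c₁) (collapse c₀) := by
  rintro x B' (rfl | ⟨hB', habove⟩) hx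
  · obtain ⟨B, hB, hxB, hBsub⟩ :=
      exists_zebraBasis_mem (d := d) (p := x)
        (isOpen_lt continuous_subtype_val continuous_const) hx
    have hBtube : ∀ p ∈ B.carrier, collapse c₀ p ∈ (tubeOSet c₁).carrier := fun p hp =>
      show (p.2 : ℝ) < c₁ from hBsub hp
    refine ⟨B, hB, hxB, hBtube, fun p q hpq =>
      ⟨?_, hBtube p ((zebraBasis_isPoset hB).1 p q hpq).1⟩⟩
    obtain ⟨h2, h1 | hlev⟩ := zebraBasis_le hB hpq
    · rw [Prod.ext h1 h2]
    by_cases hp : (p.2 : ℝ) ≤ c₀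
    · simp only [collapse, if_pos (h2 ▸ hp : (q.2 : ℝ) ≤ c₀), h2]
    · exact absurd hlev (hgap _ ⟨not_le.mp hp, hBsub ((zebraBasis_isPoset hB).1 p q hpq).1⟩)
  · have hid : ∀ p ∈ B'.carrier, collapse c₀ p = p := fun p hp => collapse_of_lt (habove p hp)
    have hxB' : x ∈ B'.carrier := by
      rwa [collapse_of_lt (p := x) (habove (collapse c₀ x) hx)] at hx
    refine ⟨B', hB', hxB', fun p hp => (hid p hp).symm ▸ hp, fun p q hpq => ?_⟩
    obtain ⟨hp, hq⟩ := (zebraBasis_isPoset hB').1 p q hpq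
    rwa [hid p hp, hid q hq]

end Collapse

theorem not_zebraLevel_of_mem_Ioo {d : ℕ → ℝ} (hd : StrictAnti d) (hd0 : ∀ n, 0 ≤ d n) (n : ℕ) :
    ∀ t ∈ Ioo (d (2 * n + 2)) (d (2 * n + 1)), ¬ zebraLevel d t := by
  rintro t ⟨h₀, h₁⟩ (rfl | ⟨k, hk₁, hk₂⟩)
  · linarith [hd0 (2 * n + 2)]
  rcases le_or_gt k n with hkn | hkn
  · linarith [hd.antitone (show 2 * k + 1 ≤ 2 * n + 1 by omega)]
  · linarith [hd.antitone (show 2 * n + 2 ≤ 2 * k by omega)]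

theorem tendsto_odd_stripe {d : ℕ → ℝ} (hd : StrictAnti d) (hd01 : ∀ n, d n ∈ Icc (0 : ℝ) 1)
    (hinf : ⨅ n, d n = 0) :
    Tendsto (fun n => (⟨d (2 * n + 1), hd01 _⟩ : unitInterval)) atTop (𝓝 0) := by
  have hd_lim := hinf ▸ tendsto_atTop_ciInf hd.antitone ⟨0, by rintro _ ⟨n, rfl⟩; exact (hd01 n).1⟩
  exact tendsto_subtype_rng.2
    (hd_lim.comp (tendsto_atTop_mono (fun n => show n ≤ 2 * n + 1 by omega) tendsto_id))

/-- The pair `i₀, c₀ : S¹ → Z` into the zebra cylinder has no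
coequalizer in the category of locally ordered spaces. -/
theorem stmt17 (d : ℕ → ℝ) (hd : StrictAnti d) (hd01 : ∀ n, d n ∈ Set.Icc (0 : ℝ) 1)
    (hinf : ⨅ n, d n = 0) :
    ¬ ∃ (C : LocOrdSpace.{u}) (g : Circle × unitInterval → C.carrier),
        IsCoeqIn (fun _ : LocOrdSpace.{u} => True) (zebraBasis d) C.basis
          (fun s : Circle => (s, (0 : unitInterval)))
          (fun _ : Circle => ((1 : Circle), (0 : unitInterval))) g := by
  rintro ⟨C, g, hg, hgu, huniv⟩
  let _ := C.top
  have hd0 : ∀ n, 0 ≤ d n := fun n => (hd01 n).1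
  obtain ⟨n, hn⟩ := ((tendsto_odd_stripe hd hd01 hinf).eventually
    (eventually_eq_on_circle_of_locIncr C.isBasis hg (congrFun hgu))).exists
  set t : unitInterval := ⟨d (2 * n + 1), hd01 _⟩
  have hlev : zebraLevel d t := Or.inr ⟨n, le_rfl, (hd (lt_add_one _)).le⟩
  have hc : d (2 * n + 2) < t := hd (by omega)
  have hgap := not_zebraLevel_of_mem_Ioo hd hd0 n
  obtain ⟨h, -, hfac⟩ := (huniv (collapseBasis_isInterpolatingCover hc hgap).uliftSpace trivial
    (ULift.up ∘ collapse (d (2 * n + 2))) (LocIncr.comap (locIncr_collapse hgap))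
    (funext fun s => congrArg ULift.up
      ((collapse_zero (hd0 _) s).trans (collapse_zero (hd0 _) 1).symm))).exists
  have heq : (Circle.exp π, t) = ((1 : Circle), t) := by
    rw [← collapse_of_lt (p := (Circle.exp π, t)) hc, ← collapse_of_lt (p := (1, t)) hc]
    exact congrArg ULift.down ((congrFun hfac _).trans
      ((congrArg h (hn hlev _)).trans (congrFun hfac _).symm))
  exact Circle.exp_pi_ne_one (congrArg Prod.fst heq)
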